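/- arXiv:1309.4702 — 3 statements merged into one kernel-verified Lean document; each statement's English description precedes it below -/
import Mathlib

section
/- The polytope Q in R^3 with vertices (−1,0,0), (0,−1,0), (0,0,−1), (0,1,1), (1,0,1), (1,1,0) is totally generating: every lattice point of the cone over Q × {1} in R^4 (i.e., the cone generated by the vertices placed at height 1) is a nonnegative integer combination of the six vertices (each placed at height 1). -/
/-!
`Q` is a triangular prism: its bottom face `-e₁, -e₂, -e₃` lies in the plane `x₀ + x₁ + x₂ = -1`
and its top face `e₂ + e₃, e₁ + e₃, e₁ + e₂` in the plane `x₀ + x₁ + x₂ = 2`. Every lifted vertex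
has coordinate sum divisible by 3, and so does every lattice point `x`; write `3t` for it. A
combination with multiplicities `n` must use `t` top vertices and `x₃ - t` bottom ones, and
matching the first three coordinates says that `n₀ + n₃ = t - x₀`, `n₁ + n₄ = t - x₁`,
`n₂ + n₅ = t - x₂` with `n₃ + n₄ + n₅ = t`. Such a split of `t` exists exactly when the five
facet inequalities of the cone hold.
-/

/-- The six vertices of the polytope `Q` in `ℝ³`, placed at height 1 in `ℤ⁴`:
`(−1,0,0,1), (0,−1,0,1), (0,0,−1,1), (0,1,1,1), (1,0,1,1), (1,1,0,1)`. -/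
def vQ : Fin 6 → (Fin 4 → ℤ) :=
  ![![-1,0,0,1], ![0,-1,0,1], ![0,0,-1,1], ![0,1,1,1], ![1,0,1,1], ![1,1,0,1]]

open Matrix

lemma dvd_dotProduct_of_mem_span {R ι n : Type*} [CommSemiring R] [Fintype n] {v : ι → n → R}
    {x : n → R} (ℓ : n → R) {k : R} (hv : ∀ i, k ∣ ℓ ⬝ᵥ v i)
    (hx : x ∈ Submodule.span R (Set.range v)) :
    k ∣ ℓ ⬝ᵥ x := by
  induction hx using Submodule.span_induction with
  | mem y hy => obtain ⟨i, rfl⟩ := hy; exact hv i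
  | zero => simp
  | add y z _ _ hy hz => rw [dotProduct_add]; exact dvd_add hy hz
  | smul r y _ hy => rw [dotProduct_smul, smul_eq_mul]; exact dvd_mul_of_dvd_right hy r

lemma dotProduct_nonneg_of_mem_cone {ι n : Type*} [Fintype ι] [Fintype n] {v : ι → n → ℤ}
    {x : n → ℤ} (ℓ : n → ℤ) (hv : ∀ i, 0 ≤ ℓ ⬝ᵥ v i)
    (hx : ∃ c : ι → ℝ, (∀ i, 0 ≤ c i) ∧
      (fun j => (x j : ℝ)) = ∑ i, c i • fun j => (v i j : ℝ)) :
    0 ≤ ℓ ⬝ᵥ x := by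
  obtain ⟨c, hc, hxc⟩ := hx
  have hcast (y : n → ℤ) : ((ℓ ⬝ᵥ y : ℤ) : ℝ) = (Int.cast ∘ ℓ) ⬝ᵥ fun j => (y j : ℝ) :=
    RingHom.map_dotProduct (Int.castRingHom ℝ) ℓ y
  have hsum : ((ℓ ⬝ᵥ x : ℤ) : ℝ) = ∑ i, c i * ((ℓ ⬝ᵥ v i : ℤ) : ℝ) := by
    simp only [hcast, hxc, dotProduct_sum, dotProduct_smul, smul_eq_mul]
  exact_mod_cast hsum ▸ Finset.sum_nonneg fun i _ => mul_nonneg (hc i) (by exact_mod_cast hv i)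

/-- Inner normals of the facets of the cone over `Q`: the bottom triangle, the top triangle and
the three quadrilaterals. -/
def facetNormalQ : Fin 5 → Fin 4 → ℤ :=
  ![![1,1,1,1], ![-1,-1,-1,2], ![-2,1,1,1], ![1,-2,1,1], ![1,1,-2,1]]

lemma exists_add_add_eq_of_le_add_add {t u₀ u₁ u₂ : ℕ} (h : t ≤ u₀ + u₁ + u₂) :
    ∃ m₀ m₁ m₂, m₀ ≤ u₀ ∧ m₁ ≤ u₁ ∧ m₂ ≤ u₂ ∧ m₀ + m₁ + m₂ = t :=
  ⟨min t u₀, min (t - u₀) u₁, t - u₀ - u₁, by omega⟩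

lemma exists_nat_comb_vQ_of_facet_nonneg (x : Fin 4 → ℤ) (hlat : 3 ∣ ![1,1,1,1] ⬝ᵥ x)
    (hfacet : ∀ k, 0 ≤ facetNormalQ k ⬝ᵥ x) : ∃ n : Fin 6 → ℕ, x = ∑ i, n i • vQ i := by
  simp only [facetNormalQ, dotProduct, Fin.forall_fin_succ, Fin.sum_univ_four, cons_val',
    cons_val, cons_val_zero, cons_val_one, cons_val_succ, cons_val_fin_one, one_mul, neg_mul,
    forall_const] at hfacet hlat
  obtain ⟨t, ht⟩ : ∃ t : ℕ, x 0 + x 1 + x 2 + x 3 = 3 * t := by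
    obtain ⟨s, hs⟩ := hlat
    exact ⟨s.toNat, by omega⟩
  obtain ⟨m₀, m₁, m₂, h₀, h₁, h₂, hm⟩ :=
    exists_add_add_eq_of_le_add_add (t := t) (u₀ := (t - x 0).toNat) (u₁ := (t - x 1).toNat)
      (u₂ := (t - x 2).toNat) (by omega)
  refine ⟨![(t - x 0).toNat - m₀, (t - x 1).toNat - m₁, (t - x 2).toNat - m₂, m₀, m₁, m₂], ?_⟩
  ext j
  fin_cases j <;>
    simp only [Fin.zero_eta, Fin.mk_one, Fin.reduceFinMk, Fin.isValue, vQ, Fin.sum_univ_six,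
      Finset.sum_apply, nsmul_eq_mul, Pi.mul_apply, Pi.natCast_apply, cons_val', cons_val,
      cons_val_zero, cons_val_one, cons_val_fin_one, mul_neg, mul_one, mul_zero, add_zero,
      zero_add] <;>
    omega

/-- The polytope `Q` is totally generating: every point of the real cone
generated by the six lifted vertices `(vᵢ,1)` which lies in the lattice
generated by the `(vᵢ,1)` is a nonnegative integer combination of them. -/
theorem stmt3 (x : Fin 4 → ℤ)
    (hlat : x ∈ Submodule.span ℤ (Set.range vQ))
    (hcone : ∃ c : Fin 6 → ℝ, (∀ i, 0 ≤ c i) ∧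
      (fun j => (x j : ℝ)) = ∑ i, c i • fun j => (vQ i j : ℝ)) :
    ∃ n : Fin 6 → ℕ, x = ∑ i, n i • vQ i :=
  exists_nat_comb_vQ_of_facet_nonneg x
    (dvd_dotProduct_of_mem_span _ (by decide) hlat)
    (fun k => dotProduct_nonneg_of_mem_cone _ (by revert k; decide) hcone)
end

section
/- Let p_a be the function on the lattice N = Z⟨f_1,f_2,f_3,h_1,h_2⟩ (modulo the relation h_1 + h_2 = f_1 + f_2 + f_3, so N ≅ Z^4) defined by p_a(D) = (D² + D·K)/2 + 1 with the intersection form f_i² = 0, f_i·f_j = 1 (i≠j), h_j² = 1, h_1·h_2 = 2, f_i·h_j = 1, and K the class with K·f_i = −2, K·h_j = −3. Then for any D = Σ n_i f_i + Σ m_j h_j with all n_i, m_j ≥ 0 and D ≠ 0, one has p_a(D) ≥ −(max coefficient − 1); in particular if at least two of the five coefficients are positive then p_a(D) ≥ 0. -/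
/-- The intersection form of the degree-6 del Pezzo surface `Y = Bl₃ℙ²` on
`Pic Y = ℤ⁴` in the basis `h, e₁, e₂, e₃` (`h² = 1`, `eᵢ² = −1`, `h·eᵢ = 0`). -/
def dpInter (x y : Fin 4 → ℤ) : ℤ :=
  x 0 * y 0 - x 1 * y 1 - x 2 * y 2 - x 3 * y 3

/-- The canonical class `K = −3h + e₁ + e₂ + e₃`. -/
def dpK : Fin 4 → ℤ := ![-3, 1, 1, 1]

/-- The arithmetic genus `p_a(D) = (D² + D·K)/2 + 1`. -/
def dpPa (D : Fin 4 → ℤ) : ℤ := (dpInter D D + dpInter D dpK) / 2 + 1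

/-- The fibers of the three rulings: `fᵢ = h − eᵢ`. -/
def dpF : Fin 3 → (Fin 4 → ℤ) := ![![1,-1,0,0], ![1,0,-1,0], ![1,0,0,-1]]

/-- The two hyperplane classes: `h₁ = h`, `h₂ = 2h − e₁ − e₂ − e₃`. -/
def dpH : Fin 2 → (Fin 4 → ℤ) := ![![1,0,0,0], ![2,-1,-1,-1]]

/-- The six `(−1)`-classes `e₁, e₂, e₃, h−e₁−e₂, h−e₁−e₃, h−e₂−e₃`. -/
def dpE : Fin 6 → (Fin 4 → ℤ) :=
  ![![0,1,0,0], ![0,0,1,0], ![0,0,0,1],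
    ![1,-1,-1,0], ![1,-1,0,-1], ![1,0,-1,-1]]

lemma dp_pos (a b c d e : ℤ) (ha : 0 ≤ a) (hb : 0 ≤ b) (hc : 0 ≤ c)
    (hd : 0 ≤ d) (he : 0 ≤ e) (ht : 1 ≤ d + e) :
    0 ≤ 2*(a*b + a*c + b*c) + 2*(a+b+c)*(d+e) + d*d + e*e + 4*(d*e)
      - 2*(a+b+c) - 3*(d+e) + 2 := by
  have h1 : 0 ≤ (a+b+c)*(d+e-1) := mul_nonneg (by linarith) (by linarith)
  have h2 : 0 ≤ (d+e-1)*(d+e-2) := by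
    rcases le_or_gt 2 (d+e) with h|h
    · exact mul_nonneg (by linarith) (by linarith)
    · have hde : d + e = 1 := by omega
      rw [hde]; norm_num
  nlinarith [mul_nonneg hd he, mul_nonneg ha hb, mul_nonneg ha hc, mul_nonneg hb hc]

lemma dp_two (a b c : ℤ) (ha : 1 ≤ a) (hb : 1 ≤ b) (hc : 0 ≤ c) :
    0 ≤ a*b + a*c + b*c - (a+b+c) + 1 := by
  nlinarith [mul_nonneg (show (0:ℤ) ≤ a - 1 by linarith) (show (0:ℤ) ≤ b - 1 by linarith),
    mul_nonneg hc (show (0:ℤ) ≤ a + b - 2 by linarith)]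

lemma dp_max (a b c M : ℤ) (ha : 0 ≤ a) (hb : 0 ≤ b) (hc : 0 ≤ c)
    (hMa : a ≤ M) (hMb : b ≤ M) (hMc : c ≤ M) (hs : 1 ≤ a + b + c) :
    -(M - 1) ≤ a*b + a*c + b*c - (a+b+c) + 1 := by
  rcases le_or_gt 1 a with h1|h1 <;> rcases le_or_gt 1 b with h2|h2 <;>
    rcases le_or_gt 1 c with h3|h3
  · nlinarith [dp_two a b c h1 h2 hc]
  · obtain rfl : c = 0 := by omega
    nlinarith [dp_two a b 0 h1 h2 le_rfl]
  · obtain rfl : b = 0 := by omega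
    nlinarith [dp_two a c 0 h1 h3 le_rfl]
  · obtain rfl : b = 0 := by omega
    obtain rfl : c = 0 := by omega
    nlinarith []
  · obtain rfl : a = 0 := by omega
    nlinarith [dp_two b c 0 h2 h3 le_rfl]
  · obtain rfl : a = 0 := by omega
    obtain rfl : c = 0 := by omega
    nlinarith []
  · obtain rfl : a = 0 := by omega
    obtain rfl : b = 0 := by omega
    nlinarith []
  · omega

open Finset in
/-- For `D = Σ nᵢfᵢ + Σ mⱼhⱼ` with all coefficients nonnegative and `D ≠ 0`,
one has `p_a(D) ≥ −(max coefficient − 1)`; and if at least two of the five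
coefficients are positive then `p_a(D) ≥ 0`. -/
theorem stmt7 (n : Fin 3 → ℕ) (m : Fin 2 → ℕ) (D : Fin 4 → ℤ)
    (hD : D = ∑ i, (n i : ℤ) • dpF i + ∑ j, (m j : ℤ) • dpH j)
    (hD0 : D ≠ 0) :
    -(((max (Finset.univ.sup n) (Finset.univ.sup m) : ℕ) : ℤ) - 1) ≤ dpPa D ∧
    (2 ≤ (Finset.univ.filter fun i => 0 < n i).card +
          (Finset.univ.filter fun j => 0 < m j).card → 0 ≤ dpPa D) := by
  obtain ⟨k, hk⟩ := Int.even_mul_succ_self (m 0 : ℤ)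
  obtain ⟨l, hl⟩ := Int.even_mul_succ_self (m 1 : ℤ)
  have h0 : D 0 = (n 0:ℤ) + n 1 + n 2 + m 0 + 2 * m 1 := by
    rw [hD]; simp [dpF, dpH, Fin.sum_univ_three, Fin.sum_univ_two]; ring
  have h1 : D 1 = -(n 0:ℤ) - m 1 := by
    rw [hD]; simp [dpF, dpH, Fin.sum_univ_three, Fin.sum_univ_two]; ring
  have h2 : D 2 = -(n 1:ℤ) - m 1 := by
    rw [hD]; simp [dpF, dpH, Fin.sum_univ_three, Fin.sum_univ_two]; ring
  have h3 : D 3 = -(n 2:ℤ) - m 1 := by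
    rw [hD]; simp [dpF, dpH, Fin.sum_univ_three, Fin.sum_univ_two]; ring
  have hS : dpInter D D + dpInter D dpK =
      2 * ((n 0:ℤ)*(n 1) + (n 0)*(n 2) + (n 1)*(n 2)
        + ((n 0:ℤ) + n 1 + n 2) * ((m 0:ℤ) + m 1)
        - ((n 0:ℤ) + n 1 + n 2) + 2*((m 0:ℤ)*(m 1)) + k - 2*(m 0:ℤ) + l - 2*(m 1:ℤ)) := by
    simp only [dpInter, dpK, h0, h1, h2, h3]
    simp [Matrix.cons_val_zero, Matrix.cons_val_one]
    linear_combination hk + hl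
  have hPa : dpPa D = (n 0:ℤ)*(n 1) + (n 0)*(n 2) + (n 1)*(n 2)
        + ((n 0:ℤ) + n 1 + n 2) * ((m 0:ℤ) + m 1)
        - ((n 0:ℤ) + n 1 + n 2) + 2*((m 0:ℤ)*(m 1)) + k - 2*(m 0:ℤ) + l - 2*(m 1:ℤ) + 1 := by
    rw [dpPa, hS]; omega
  have ha : (0:ℤ) ≤ n 0 := Int.natCast_nonneg _
  have hb : (0:ℤ) ≤ n 1 := Int.natCast_nonneg _
  have hc : (0:ℤ) ≤ n 2 := Int.natCast_nonneg _
  have hd : (0:ℤ) ≤ m 0 := Int.natCast_nonneg _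
  have he : (0:ℤ) ≤ m 1 := Int.natCast_nonneg _
  -- Not all coefficients are zero
  have hne : n 0 ≠ 0 ∨ n 1 ≠ 0 ∨ n 2 ≠ 0 ∨ m 0 ≠ 0 ∨ m 1 ≠ 0 := by
    by_contra h
    push_neg at h
    obtain ⟨e1, e2, e3, e4, e5⟩ := h
    apply hD0
    funext x
    fin_cases x
    · simpa [e1, e2, e3, e4, e5] using h0
    · simpa [e1, e5] using h1
    · simpa [e2, e5] using h2
    · simpa [e3, e5] using h3
  -- the positive-(d+e) case
  have hposcase : 1 ≤ (m 0:ℤ) + m 1 → 0 ≤ dpPa D := by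
    intro ht
    rw [hPa]
    have := dp_pos (n 0:ℤ) (n 1) (n 2) (m 0) (m 1) ha hb hc hd he ht
    nlinarith [hk, hl]
  -- max bounds
  have hMa : n 0 ≤ max (Finset.univ.sup n) (Finset.univ.sup m) :=
    le_trans (Finset.le_sup (mem_univ 0)) (le_max_left _ _)
  have hMb : n 1 ≤ max (Finset.univ.sup n) (Finset.univ.sup m) :=
    le_trans (Finset.le_sup (mem_univ 1)) (le_max_left _ _)
  have hMc : n 2 ≤ max (Finset.univ.sup n) (Finset.univ.sup m) :=
    le_trans (Finset.le_sup (mem_univ 2)) (le_max_left _ _)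
  have hMd : m 0 ≤ max (Finset.univ.sup n) (Finset.univ.sup m) :=
    le_trans (Finset.le_sup (mem_univ 0)) (le_max_right _ _)
  have hMe : m 1 ≤ max (Finset.univ.sup n) (Finset.univ.sup m) :=
    le_trans (Finset.le_sup (mem_univ 1)) (le_max_right _ _)
  have hcn : (Finset.univ.filter fun i => 0 < n i).card =
      (if 0 < n 0 then 1 else 0) + (if 0 < n 1 then 1 else 0) + (if 0 < n 2 then 1 else 0) := by
    rw [Finset.card_filter, Fin.sum_univ_three]
  have hcm : (Finset.univ.filter fun j => 0 < m j).card =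
      (if 0 < m 0 then 1 else 0) + (if 0 < m 1 then 1 else 0) := by
    rw [Finset.card_filter, Fin.sum_univ_two]
  constructor
  · -- part 1
    by_cases ht : 1 ≤ (m 0:ℤ) + m 1
    · have h00 := hposcase ht
      have hM1 : 1 ≤ ((max (Finset.univ.sup n) (Finset.univ.sup m) : ℕ) : ℤ) := by omega
      linarith
    · have hd0 : (m 0:ℤ) = 0 := by omega
      have he0 : (m 1:ℤ) = 0 := by omega
      rw [hd0] at hk; norm_num at hk
      rw [he0] at hl; norm_num at hl
      have hk0 : k = 0 := by omega
      have hl0 : l = 0 := by omega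
      have hs : 1 ≤ (n 0:ℤ) + n 1 + n 2 := by omega
      have := dp_max (n 0:ℤ) (n 1) (n 2)
        ((max (Finset.univ.sup n) (Finset.univ.sup m) : ℕ) : ℤ) ha hb hc
        (by exact_mod_cast hMa) (by exact_mod_cast hMb) (by exact_mod_cast hMc) hs
      rw [hPa, hd0, he0, hk0, hl0]
      linarith
  · -- part 2
    intro hh
    by_cases ht : 1 ≤ (m 0:ℤ) + m 1
    · exact hposcase ht
    · have hd0 : (m 0:ℤ) = 0 := by omega
      have he0 : (m 1:ℤ) = 0 := by omega
      rw [hd0] at hk; norm_num at hk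
      rw [he0] at hl; norm_num at hl
      have hk0 : k = 0 := by omega
      have hl0 : l = 0 := by omega
      have hm0 : m 0 = 0 := by omega
      have hm1 : m 1 = 0 := by omega
      have hpair : (0 < n 0 ∧ 0 < n 1) ∨ (0 < n 0 ∧ 0 < n 2) ∨ (0 < n 1 ∧ 0 < n 2) := by
        rw [hcn, hcm] at hh
        simp only [hm0, hm1, lt_self_iff_false, if_false] at hh
        split_ifs at hh
        · exact Or.inl ⟨‹0 < n 0›, ‹0 < n 1›⟩
        · exact Or.inl ⟨‹0 < n 0›, ‹0 < n 1›⟩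
        · exact Or.inr (Or.inl ⟨‹0 < n 0›, ‹0 < n 2›⟩)
        · exact absurd hh (by omega)
        · exact Or.inr (Or.inr ⟨‹0 < n 1›, ‹0 < n 2›⟩)
        · exact absurd hh (by omega)
        · exact absurd hh (by omega)
        · exact absurd hh (by omega)
      rw [hPa, hd0, he0, hk0, hl0]
      rcases hpair with ⟨p, q⟩ | ⟨p, q⟩ | ⟨p, q⟩
      · have := dp_two (n 0:ℤ) (n 1) (n 2) (by exact_mod_cast p) (by exact_mod_cast q) hc
        linarith
      · have := dp_two (n 0:ℤ) (n 2) (n 1) (by exact_mod_cast p) (by exact_mod_cast q) hb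
        linarith
      · have := dp_two (n 1:ℤ) (n 2) (n 0) (by exact_mod_cast p) (by exact_mod_cast q) ha
        linarith
end

section
/- In the lattice Z^4 with basis f_1, f_2, f_3, h_1 and relations as in the degree-6 del Pezzo surface (f_i² = 0, f_i·f_j = 1 for i≠j, h_1² = 1, f_i·h_1 = 1), every class D that has nonnegative intersection with each of the six (−1)-classes e_1, e_2, e_3, h−e_1−e_2, h−e_1−e_3, h−e_2−e_3 (in the blow-up basis h, e_1, e_2, e_3) is a nonnegative integer combination of the five classes f_1 = h−e_1, f_2 = h−e_2, f_3 = h−e_3, h_1 = h, h_2 = 2h−e_1−e_2−e_3. -/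
/-- The five nef generators `f₁, f₂, f₃, h₁, h₂`. -/
def dpNefGen : Fin 5 → (Fin 4 → ℤ) := ![dpF 0, dpF 1, dpF 2, dpH 0, dpH 1]

/-- Every class `D` with nonnegative intersection with each of the six
`(−1)`-classes is a nonnegative integer combination of
`f₁ = h−e₁, f₂ = h−e₂, f₃ = h−e₃, h₁ = h, h₂ = 2h−e₁−e₂−e₃`. -/
theorem stmt17 (D : Fin 4 → ℤ)
    (hnef : ∀ i, 0 ≤ dpInter D (dpE i)) :
    ∃ c : Fin 5 → ℕ, D = ∑ i, c i • dpNefGen i := by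
  have h0 : (0:ℤ) ≤ -(D 1) := by have := hnef 0; norm_num [dpInter, dpE, Matrix.cons_val_three, Matrix.cons_val_two, Matrix.vecHead, Matrix.vecTail] at this ⊢; linarith
  have h1 : (0:ℤ) ≤ -(D 2) := by have := hnef 1; norm_num [dpInter, dpE, Matrix.cons_val_three, Matrix.cons_val_two, Matrix.vecHead, Matrix.vecTail] at this ⊢; linarith
  have h2 : (0:ℤ) ≤ -(D 3) := by have := hnef 2; norm_num [dpInter, dpE, Matrix.cons_val_three, Matrix.cons_val_two, Matrix.vecHead, Matrix.vecTail] at this ⊢; linarith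
  have h3 : (0:ℤ) ≤ D 0 + D 1 + D 2 := by have := hnef 3; norm_num [dpInter, dpE, Matrix.cons_val_three, Matrix.cons_val_two, Matrix.vecHead, Matrix.vecTail] at this ⊢; linarith
  have e4 : dpE 4 = ![1,-1,0,-1] := by funext j; fin_cases j <;> rfl
  have e5 : dpE 5 = ![1,0,-1,-1] := by funext j; fin_cases j <;> rfl
  have h4 : (0:ℤ) ≤ D 0 + D 1 + D 3 := by have := hnef 4; rw [e4] at this; norm_num [dpInter, Matrix.cons_val_three, Matrix.cons_val_two, Matrix.vecHead, Matrix.vecTail] at this ⊢; linarith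
  have h5 : (0:ℤ) ≤ D 0 + D 2 + D 3 := by have := hnef 5; rw [e5] at this; norm_num [dpInter, Matrix.cons_val_three, Matrix.cons_val_two, Matrix.vecHead, Matrix.vecTail] at this ⊢; linarith
  set z : ℤ := max 0 (-(D 1) - D 2 - D 3 - D 0) with hz
  refine ⟨![(-(D 1) - z).toNat, (-(D 2) - z).toNat, (-(D 3) - z).toNat,
    (D 0 + D 1 + D 2 + D 3 + z).toNat, z.toNat], ?_⟩
  funext j
  simp [Fin.sum_univ_five, dpNefGen, dpF, dpH]
  fin_cases j <;> simp <;> omega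
end
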